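/- Let A = (a_k) be a Blaschke sequence of distinct points in 𝔻 satisfying ψ(a_j,a_k) > 1/2 for all j ≠ k, and let F = B_A be its Blaschke product. If F is uniformly nonzero, then inf_k (1−|a_k|²)|F′(a_k)| > 0, and consequently A is uniformly separated. -/

import Mathlib

open Complex MeasureTheory Metric Filter Set List

noncomputable section

/-- The Möbius involution `φ_a(z) = (a - z)/(1 - ā z)` of the unit disk interchanging `0` and `a`. -/
def mobius (a z : ℂ) : ℂ := (a - z) / (1 - (starRingEnd ℂ) a * z)

/-- The pseudohyperbolic metric `ψ(z,w) = |z - w| / |1 - w̄ z|`. -/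
def pseudoDist (z w : ℂ) : ℝ := ‖(z - w) / (1 - (starRingEnd ℂ) w * z)‖

/-- A single Blaschke factor with zero at `a` (equal to `z` when `a = 0`). -/
def blaschkeFactor (a z : ℂ) : ℂ :=
  if a = 0 then z
  else ((starRingEnd ℂ) a / (‖a‖ : ℂ)) * ((a - z) / (1 - (starRingEnd ℂ) a * z))

/-- The Blaschke product associated with the sequence `Z`. -/
def blaschkeProduct (Z : ℕ → ℂ) (z : ℂ) : ℂ := ∏' k, blaschkeFactor (Z k) z

/-- `Z` is a Blaschke sequence in the unit disk: `Σ (1 - |z_k|²) < ∞`. -/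
def IsBlaschkeSeq (Z : ℕ → ℂ) : Prop :=
  (∀ k, ‖Z k‖ < 1) ∧ Summable (fun k => 1 - ‖Z k‖ ^ 2)

/-- A sequence is uniformly separated if `inf_k ∏_{j ≠ k} ψ(z_j, z_k) > 0`. -/
def UniformlySeparated {ι : Type*} (Z : ι → ℂ) : Prop :=
  ∃ δ : ℝ, 0 < δ ∧ ∀ k : ι, δ ≤ ∏' j : {j : ι // j ≠ k}, pseudoDist (Z j.1) (Z k)

/-- `Z` is a finite union of uniformly separated sequences. -/
def FiniteUnionUnifSep (Z : ℕ → ℂ) : Prop :=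
  ∃ (n : ℕ) (c : ℕ → Fin n), ∀ i : Fin n,
    UniformlySeparated (fun k : {k : ℕ // c k = i} => Z k.1)

/-- `φ` is a conformal automorphism of the unit disk. -/
def IsDiskAut (φ : ℂ → ℂ) : Prop :=
  ∃ c a : ℂ, ‖c‖ = 1 ∧ ‖a‖ < 1 ∧ ∀ z, φ z = c * mobius a z

/-- The sequence of functions `F n` tends to `0` uniformly on compact subsets of the unit disk. -/
def TendstoZeroOnCompacts (F : ℕ → ℂ → ℂ) : Prop :=
  ∀ K : Set ℂ, K ⊆ Metric.ball (0 : ℂ) 1 → IsCompact K →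
    TendstoUniformlyOn F (fun _ => (0 : ℂ)) Filter.atTop K

/-- `B` is uniformly (bounded away from) nonzero: for no sequence of conformal automorphisms
`φ_n` of the disk do the compositions `B ∘ φ_n` tend to `0` uniformly on compacta. -/
def UniformlyNonzero (B : ℂ → ℂ) : Prop :=
  ∀ φ : ℕ → ℂ → ℂ, (∀ n, IsDiskAut (φ n)) →
    ¬ TendstoZeroOnCompacts (fun n z => B (φ n z))

/-- The Carleson square based on the arc `{e^{iθ} : θ₀ ≤ θ ≤ θ₀ + 2πℓ}` of normalized length `ℓ`. -/
def carlesonBox (θ₀ ℓ : ℝ) : Set ℂ :=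
  {z : ℂ | z ≠ 0 ∧ ‖z‖ < 1 ∧ 1 - ‖z‖ < ℓ ∧
    ∃ θ ∈ Set.Icc θ₀ (θ₀ + 2 * Real.pi * ℓ),
      (z / (‖z‖ : ℂ)) = Complex.exp (θ * Complex.I)}

/-- `μ` is a Carleson measure with constant `C`. -/
def CarlesonWith (μ : Measure ℂ) (C : ℝ) : Prop :=
  ∀ θ₀ ℓ : ℝ, 0 < ℓ → ℓ ≤ 1 → μ (carlesonBox θ₀ ℓ) ≤ ENNReal.ofReal (C * ℓ)

/-- `μ` is a Carleson measure. -/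
def IsCarlesonMeasure (μ : Measure ℂ) : Prop := ∃ C : ℝ, CarlesonWith μ C

/-- The measure `Σ_k (1 - |z_k|²) δ_{z_k}`. -/
def seqMeasure (Z : ℕ → ℂ) : Measure ℂ :=
  Measure.sum (fun k => ENNReal.ofReal (1 - ‖Z k‖ ^ 2) • Measure.dirac (Z k))

/-- The number of occurrences of `ζ` in the sequence `Z`. -/
def multIn (Z : ℕ → ℂ) (ζ : ℂ) : ℕ := Nat.card {k : ℕ // Z k = ζ}

/-- `f` vanishes at each point of `Z` to order at least its multiplicity in `Z`. -/
def VanishesOn (f : ℂ → ℂ) (Z : ℕ → ℂ) : Prop :=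
  ∀ ζ : ℂ, ∀ j : ℕ, j < multIn Z ζ → iteratedDeriv j f ζ = 0

/-- The Bergman space norm `‖f‖_{A^p} = (∫_𝔻 |f|^p dA)^{1/p}`. -/
def bergmanNorm (p : ℝ) (f : ℂ → ℂ) : ℝ :=
  (∫ z in Metric.ball (0 : ℂ) 1, ‖f z‖ ^ p) ^ (1 / p)

/-- Membership in the Bergman space `A^p`. -/
def MemBergman (p : ℝ) (f : ℂ → ℂ) : Prop :=
  AnalyticOnNhd ℂ f (Metric.ball 0 1) ∧
    IntegrableOn (fun z => ‖f z‖ ^ p) (Metric.ball (0 : ℂ) 1)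

/-- The weighted Bergman norm `‖f‖_{A^{p,α}} = (∫_𝔻 |f(z)|^p (1-|z|²)^α dA(z))^{1/p}`. -/
def bergmanNormW (p α : ℝ) (f : ℂ → ℂ) : ℝ :=
  (∫ z in Metric.ball (0 : ℂ) 1,
    ‖f z‖ ^ p * (1 - ‖z‖ ^ 2) ^ α) ^ (1 / p)

/-- Membership in the weighted Bergman space `A^{p,α}`. -/
def MemBergmanW (p α : ℝ) (f : ℂ → ℂ) : Prop :=
  AnalyticOnNhd ℂ f (Metric.ball 0 1) ∧
    IntegrableOn (fun z => ‖f z‖ ^ p * (1 - ‖z‖ ^ 2) ^ α)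
      (Metric.ball (0 : ℂ) 1)

/-- The Hardy space integral means `M_p(f,r)^p`. -/
def hardyMean (p : ℝ) (f : ℂ → ℂ) (r : ℝ) : ℝ :=
  (2 * Real.pi)⁻¹ *
    ∫ θ in (0 : ℝ)..(2 * Real.pi), ‖f (r * Complex.exp (θ * Complex.I))‖ ^ p

/-- Membership in the Hardy space `H^p`, `0 < p < ∞`. -/
def MemHardy (p : ℝ) (f : ℂ → ℂ) : Prop :=
  AnalyticOnNhd ℂ f (Metric.ball 0 1) ∧
    ∃ M : ℝ, ∀ r : ℝ, 0 < r → r < 1 → hardyMean p f r ≤ M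

/-- `‖f‖_{H^p}^p = sup_{0<r<1} M_p(f,r)^p`. -/
def hardyNormP (p : ℝ) (f : ℂ → ℂ) : ℝ :=
  sSup {x : ℝ | ∃ r : ℝ, 0 < r ∧ r < 1 ∧ x = hardyMean p f r}

/-- Membership in `H^∞`: bounded analytic functions on the disk. -/
def MemHardyInf (f : ℂ → ℂ) : Prop :=
  AnalyticOnNhd ℂ f (Metric.ball 0 1) ∧
    ∃ M : ℝ, ∀ z ∈ Metric.ball (0 : ℂ) 1, ‖f z‖ ≤ M

/-! The identity `(1 - |a_k|²) |F'(a_k)| = δ_k := ∏_{j ≠ k} ψ(a_j, a_k)` comes from writing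
`F = b_k · G_k`, where `b_k` is the Blaschke factor vanishing at `a_k` and `G_k` the (holomorphic)
product of the others. If `ψ(w, a_k) ≤ r`, the strong triangle inequality for `ψ` gives
`1 - ψ(a_j, a_k) ≤ (1 + r)/(1 - r) · (1 - ψ(w, a_j))`; as `ψ(a_j, a_k) ≥ 1/2`, this yields
`ψ(a_j, a_k) ≥ ψ(w, a_j) ^ (2(1 + r)/(1 - r))` factor by factor, hence
`δ_k ≥ |F(w)| ^ (2(1 + r)/(1 - r))`. So if `δ_{k_n} → 0`, then `F ∘ φ_{a_{k_n}} → 0` uniformly on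
each disc `|z| ≤ r`, which uniform nonzeroness forbids. -/

open ComplexConjugate Topology

lemma Multipliable.tprod_le_prod_of_le_one {ι : Type*} {f : ι → ℝ} (hf : Multipliable f)
    (h0 : ∀ i, 0 ≤ f i) (h1 : ∀ i, f i ≤ 1) (s : Finset ι) : ∏' i, f i ≤ ∏ i ∈ s, f i := by
  classical
  refine le_of_tendsto hf.hasProd (eventually_atTop.2 ⟨s, fun t hst => ?_⟩)
  rw [← Finset.prod_sdiff hst]
  exact mul_le_of_le_one_left (Finset.prod_nonneg fun i _ => h0 i)
    (Finset.prod_le_one (fun i _ => h0 i) fun i _ => h1 i)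

-- `log v ≥ 1 - v⁻¹ ≥ -2K (1 - t) ≥ 2K log t`, the middle step using `v ≥ 1/2`.
lemma rpow_two_mul_le_of_one_sub_le {t v K : ℝ} (ht0 : 0 ≤ t) (ht1 : t ≤ 1) (hv : 1 / 2 ≤ v)
    (hK : 0 < K) (h : 1 - v ≤ K * (1 - t)) : t ^ (2 * K) ≤ v := by
  rcases ht0.eq_or_lt with rfl | ht
  · rw [Real.zero_rpow (by positivity)]; linarith
  have hv0 : 0 < v := by linarith
  have hinv : v⁻¹ ≤ 1 + 2 * K * (1 - t) := by
    rw [inv_le_iff_one_le_mul₀ hv0]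
    nlinarith [mul_nonneg hK.le (sub_nonneg.2 ht1)]
  rw [← Real.exp_log hv0, Real.rpow_def_of_pos ht, Real.exp_le_exp]
  nlinarith [Real.log_le_sub_one_of_pos ht, Real.one_sub_inv_le_log_of_pos hv0]

lemma one_sub_conj_mul_ne_zero {z w : ℂ} (hz : ‖z‖ < 1) (hw : ‖w‖ ≤ 1) :
    1 - conj w * z ≠ 0 := by
  intro h
  have h1 := congrArg norm (sub_eq_zero.mp h)
  rw [norm_one, norm_mul, Complex.norm_conj] at h1
  nlinarith [norm_nonneg z, norm_nonneg w]

lemma norm_one_sub_conj_mul_sq_sub_norm_sub_sq (z w : ℂ) :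
    ‖1 - conj w * z‖ ^ 2 - ‖z - w‖ ^ 2 = (1 - ‖z‖ ^ 2) * (1 - ‖w‖ ^ 2) := by
  simp only [Complex.sq_norm, Complex.normSq_apply, Complex.sub_re, Complex.sub_im,
    Complex.mul_re, Complex.mul_im, Complex.conj_re, Complex.conj_im, Complex.one_re,
    Complex.one_im]
  ring

lemma one_sub_pseudoDist_sq {z w : ℂ} (hz : ‖z‖ < 1) (hw : ‖w‖ ≤ 1) :
    1 - pseudoDist z w ^ 2 = (1 - ‖z‖ ^ 2) * (1 - ‖w‖ ^ 2) / ‖1 - conj w * z‖ ^ 2 := by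
  have hD : ‖1 - conj w * z‖ ≠ 0 := norm_ne_zero_iff.mpr (one_sub_conj_mul_ne_zero hz hw)
  rw [pseudoDist, norm_div, div_pow, ← norm_one_sub_conj_mul_sq_sub_norm_sub_sq,
    eq_div_iff (pow_ne_zero 2 hD), sub_mul, div_mul_cancel₀ _ (pow_ne_zero 2 hD), one_mul]

lemma pseudoDist_nonneg (z w : ℂ) : 0 ≤ pseudoDist z w := norm_nonneg _

lemma pseudoDist_comm (z w : ℂ) : pseudoDist z w = pseudoDist w z := by
  rw [pseudoDist, pseudoDist, norm_div, norm_div, norm_sub_rev z w,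
    ← Complex.norm_conj (1 - conj w * z)]
  simp [mul_comm]

lemma pseudoDist_lt_one {z w : ℂ} (hz : ‖z‖ < 1) (hw : ‖w‖ < 1) : pseudoDist z w < 1 := by
  have h := one_sub_pseudoDist_sq hz hw.le
  have hpos : 0 < (1 - ‖z‖ ^ 2) * (1 - ‖w‖ ^ 2) / ‖1 - conj w * z‖ ^ 2 := by
    have := norm_pos_iff.mpr (one_sub_conj_mul_ne_zero hz hw.le)
    have : 0 < 1 - ‖z‖ ^ 2 := by nlinarith [norm_nonneg z]
    have : 0 < 1 - ‖w‖ ^ 2 := by nlinarith [norm_nonneg w]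
    positivity
  nlinarith [pseudoDist_nonneg z w]

lemma norm_mobius (w z : ℂ) : ‖mobius w z‖ = pseudoDist z w := by
  rw [mobius, pseudoDist, norm_div, norm_div, norm_sub_rev w z]

lemma norm_blaschkeFactor (α z : ℂ) : ‖blaschkeFactor α z‖ = pseudoDist z α := by
  rw [blaschkeFactor]
  split_ifs with h
  · simp [h, pseudoDist]
  · rw [norm_mul, norm_div (conj α), Complex.norm_conj, Complex.norm_real, Real.norm_eq_abs,
      abs_norm, div_self (norm_ne_zero_iff.mpr h), one_mul, ← norm_mobius, mobius]

lemma pseudoDist_mobius_self {w z : ℂ} (hz : ‖z‖ < 1) (hw : ‖w‖ < 1) :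
    pseudoDist (mobius w z) w = ‖z‖ := by
  have hz' := one_sub_conj_mul_ne_zero hz hw.le
  have hw' := one_sub_conj_mul_ne_zero hw hw.le
  have hz'' : 1 - z * conj w ≠ 0 := by rwa [mul_comm]
  have hnum : mobius w z - w = -z * (1 - conj w * w) / (1 - conj w * z) := by
    rw [mobius]; field_simp; ring
  have hden : 1 - conj w * mobius w z = (1 - conj w * w) / (1 - conj w * z) := by
    rw [mobius]; field_simp; ring
  have key : (mobius w z - w) / (1 - conj w * mobius w z) = -z := by
    rw [hnum, hden, div_div_div_cancel_right₀ hz', mul_div_cancel_right₀ _ hw']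
  rw [pseudoDist, key, norm_neg]

lemma pseudoDist_mobius_mobius {w x y : ℂ} (hw : ‖w‖ < 1) (hx : ‖x‖ < 1) (hy : ‖y‖ < 1) :
    pseudoDist (mobius w x) (mobius w y) = pseudoDist x y := by
  have hx' := one_sub_conj_mul_ne_zero hx hw.le
  have hy' := one_sub_conj_mul_ne_zero hy hw.le
  have hw' := one_sub_conj_mul_ne_zero hw hw.le
  have hxy := one_sub_conj_mul_ne_zero hx hy.le
  have hy'' : 1 - w * conj y ≠ 0 := by
    simpa [mul_comm] using (map_ne_zero (starRingEnd ℂ)).mpr hy'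
  have hnum : mobius w x - mobius w y
      = (1 - conj w * w) * (y - x) / ((1 - conj w * x) * (1 - conj w * y)) := by
    rw [mobius, mobius, div_sub_div _ _ hx' hy']
    ring
  have hden : 1 - conj (mobius w y) * mobius w x
      = (1 - conj w * w) * (1 - conj y * x) / ((1 - w * conj y) * (1 - conj w * x)) := by
    rw [mobius, mobius, map_div₀, div_mul_div_comm, one_sub_div (mul_ne_zero ?_ hx')]
    · simp only [map_sub, map_mul, map_one, Complex.conj_conj]
      ring
    · simpa using hy''
  have hconj : ‖1 - w * conj y‖ = ‖1 - conj w * y‖ := by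
    rw [← Complex.norm_conj]; simp [mul_comm]
  have h1 := norm_ne_zero_iff.mpr hx'
  have h2 := norm_ne_zero_iff.mpr hy'
  have h3 := norm_ne_zero_iff.mpr hw'
  have h4 := norm_ne_zero_iff.mpr hxy
  rw [pseudoDist, pseudoDist, hnum, hden, div_div_div_eq, norm_div, norm_div]
  simp only [norm_mul, hconj, norm_sub_rev y x]
  field_simp

lemma sub_div_one_sub_mul_le_pseudoDist {p q : ℂ} (hp : ‖p‖ < 1) (hq : ‖q‖ < 1) :
    (‖p‖ - ‖q‖) / (1 - ‖p‖ * ‖q‖) ≤ pseudoDist p q := by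
  have hPQ : 0 < 1 - ‖p‖ * ‖q‖ := by nlinarith [norm_nonneg p, norm_nonneg q]
  have hD : 1 - ‖p‖ * ‖q‖ ≤ ‖1 - conj q * p‖ := by
    simpa [mul_comm] using norm_sub_norm_le (1 : ℂ) (conj q * p)
  have hnum : 0 ≤ (1 - ‖p‖ ^ 2) * (1 - ‖q‖ ^ 2) := by
    apply mul_nonneg <;> nlinarith [norm_nonneg p, norm_nonneg q]
  have hsq : 1 - pseudoDist p q ^ 2 ≤ 1 - ((‖p‖ - ‖q‖) / (1 - ‖p‖ * ‖q‖)) ^ 2 := by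
    calc 1 - pseudoDist p q ^ 2
        = (1 - ‖p‖ ^ 2) * (1 - ‖q‖ ^ 2) / ‖1 - conj q * p‖ ^ 2 := one_sub_pseudoDist_sq hp hq.le
      _ ≤ (1 - ‖p‖ ^ 2) * (1 - ‖q‖ ^ 2) / (1 - ‖p‖ * ‖q‖) ^ 2 :=
        div_le_div_of_nonneg_left hnum (by positivity) (pow_le_pow_left₀ hPQ.le hD 2)
      _ = 1 - ((‖p‖ - ‖q‖) / (1 - ‖p‖ * ‖q‖)) ^ 2 := by field_simp; ring
  exact (abs_le_of_sq_le_sq' (by linarith) (pseudoDist_nonneg p q)).2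

lemma one_sub_pseudoDist_le {w x y : ℂ} {r : ℝ} (hw : ‖w‖ < 1) (hx : ‖x‖ < 1) (hy : ‖y‖ < 1)
    (hr : r < 1) (hwy : pseudoDist w y ≤ r) :
    1 - pseudoDist x y ≤ (1 + r) / (1 - r) * (1 - pseudoDist w x) := by
  have hlow := sub_div_one_sub_mul_le_pseudoDist
    (norm_mobius w x ▸ pseudoDist_lt_one hx hw) (norm_mobius w y ▸ pseudoDist_lt_one hy hw)
  rw [pseudoDist_mobius_mobius hw hx hy, norm_mobius, norm_mobius, pseudoDist_comm x w,
    pseudoDist_comm y w] at hlow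
  have hP1 := pseudoDist_lt_one hw hx
  have hQ0 := pseudoDist_nonneg w y
  have hP0 := pseudoDist_nonneg w x
  set P := pseudoDist w x
  set Q := pseudoDist w y
  have hPQ : 0 < 1 - P * Q := by nlinarith
  have key : 1 - (P - Q) / (1 - P * Q) = (1 - P) * (1 + Q) / (1 - P * Q) := by
    field_simp; ring
  calc 1 - pseudoDist x y ≤ (1 - P) * (1 + Q) / (1 - P * Q) := by linarith
    _ ≤ (1 + r) / (1 - r) * (1 - P) := by
      rw [div_mul_eq_mul_div, div_le_div_iff₀ hPQ (by linarith)]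
      nlinarith [mul_nonneg (sub_nonneg.2 hP1.le) (sub_nonneg.2 hwy),
        mul_nonneg (mul_nonneg (sub_nonneg.2 hP1.le) (sub_nonneg.2 hP1.le)) hQ0,
        mul_nonneg (mul_nonneg (sub_nonneg.2 hP1.le) (sub_nonneg.2 hP1.le))
          (mul_nonneg hQ0 (hQ0.trans hwy))]

lemma blaschkeFactor_zero : blaschkeFactor 0 = id :=
  funext fun _ => if_pos rfl

lemma blaschkeFactor_of_ne_zero {α : ℂ} (h : α ≠ 0) :
    blaschkeFactor α = fun z => conj α / ‖α‖ * mobius α z :=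
  funext fun _ => if_neg h

lemma blaschkeFactor_self (α : ℂ) : blaschkeFactor α α = 0 := by
  by_cases h : α = 0 <;> simp [blaschkeFactor, h]

lemma blaschkeFactor_sub_one {α z : ℂ} (hα : ‖α‖ ≤ 1) (hz : ‖z‖ < 1) (h : α ≠ 0) :
    blaschkeFactor α z - 1
      = -(((1 - ‖α‖ : ℝ) : ℂ) * (‖α‖ + conj α * z)) / (‖α‖ * (1 - conj α * z)) := by
  have hz' := one_sub_conj_mul_ne_zero hz hα
  have hα' : (‖α‖ : ℂ) ≠ 0 := by exact_mod_cast norm_ne_zero_iff.mpr h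
  rw [blaschkeFactor, if_neg h]
  field_simp
  push_cast
  linear_combination Complex.conj_mul' α

lemma norm_blaschkeFactor_sub_one_le {α z : ℂ} (hα : ‖α‖ ≤ 1) (hz : ‖z‖ < 1) :
    ‖blaschkeFactor α z - 1‖ ≤ 2 / (1 - ‖z‖) * (1 - ‖α‖) := by
  have hz1 : 0 < 1 - ‖z‖ := by linarith
  by_cases h : α = 0
  · rw [h, norm_zero, sub_zero, mul_one, le_div_iff₀ hz1]
    simp only [blaschkeFactor, if_true]
    nlinarith [norm_sub_le z 1, norm_nonneg z, norm_one (α := ℂ)]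
  have hαpos : 0 < ‖α‖ := norm_pos_iff.mpr h
  have hnum : ‖(‖α‖ : ℂ) + conj α * z‖ ≤ 2 * ‖α‖ := by
    refine (norm_add_le _ _).trans ?_
    rw [norm_mul, Complex.norm_conj, Complex.norm_real, Real.norm_of_nonneg hαpos.le]
    nlinarith
  have hden : 1 - ‖z‖ ≤ ‖1 - conj α * z‖ := by
    refine le_trans ?_ (norm_sub_norm_le _ _)
    rw [norm_one, norm_mul, Complex.norm_conj]
    nlinarith [norm_nonneg z]
  rw [blaschkeFactor_sub_one hα hz h, norm_div, norm_neg, norm_mul, norm_mul, Complex.norm_real,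
    Complex.norm_real, Real.norm_of_nonneg hαpos.le, Real.norm_of_nonneg (by linarith)]
  calc (1 - ‖α‖) * ‖(‖α‖ : ℂ) + conj α * z‖ / (‖α‖ * ‖1 - conj α * z‖)
      ≤ (1 - ‖α‖) * (2 * ‖α‖) / (‖α‖ * (1 - ‖z‖)) := by gcongr
    _ = 2 / (1 - ‖z‖) * (1 - ‖α‖) := by field_simp

lemma differentiableAt_blaschkeFactor {α z : ℂ} (hα : ‖α‖ ≤ 1) (hz : ‖z‖ < 1) :
    DifferentiableAt ℂ (blaschkeFactor α) z := by
  by_cases h : α = 0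
  · rw [h, blaschkeFactor_zero]; exact differentiableAt_id
  · rw [blaschkeFactor_of_ne_zero h]
    exact (differentiableAt_const _).mul
      (((differentiableAt_const _).sub differentiableAt_id).div
        ((differentiableAt_const _).sub (differentiableAt_id.const_mul _))
        (one_sub_conj_mul_ne_zero hz hα))

lemma exists_hasDerivAt_blaschkeFactor_self {α : ℂ} (hα : ‖α‖ < 1) :
    ∃ d, HasDerivAt (blaschkeFactor α) d α ∧ ‖d‖ = (1 - ‖α‖ ^ 2)⁻¹ := by
  by_cases h : α = 0
  · subst h
    exact ⟨1, by simpa [blaschkeFactor_zero] using hasDerivAt_id (0 : ℂ), by simp⟩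
  have hD : 1 - conj α * α = ((1 - ‖α‖ ^ 2 : ℝ) : ℂ) := by
    rw [Complex.conj_mul']; push_cast; ring
  have hD0 : (0 : ℝ) < 1 - ‖α‖ ^ 2 := by nlinarith [norm_nonneg α]
  have hDne : ((1 - ‖α‖ ^ 2 : ℝ) : ℂ) ≠ 0 := by exact_mod_cast hD0.ne'
  have hder : HasDerivAt (fun z => conj α / ‖α‖ * mobius α z)
      (conj α / ‖α‖ * ((-1 * (1 - conj α * α) - (α - α) * -(conj α * 1))
        / (1 - conj α * α) ^ 2)) α :=
    (((hasDerivAt_id α).const_sub α).div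
      (((hasDerivAt_id α).const_mul (conj α)).const_sub 1)
      (one_sub_conj_mul_ne_zero hα hα.le)).const_mul (conj α / ‖α‖)
  refine ⟨-(conj α / ‖α‖) / ((1 - ‖α‖ ^ 2 : ℝ) : ℂ), ?_, ?_⟩
  · rw [blaschkeFactor_of_ne_zero h]
    convert hder using 1
    rw [hD]
    field_simp
    ring
  · rw [norm_div, norm_neg, norm_div, Complex.norm_conj, Complex.norm_real, Complex.norm_real,
      Real.norm_of_nonneg hD0.le, norm_norm, div_self (norm_ne_zero_iff.mpr h), one_div]

section BlaschkeFamily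

variable {ι : Type*} {a : ι → ℂ}

lemma multipliable_blaschkeFactor (ha : ∀ j, ‖a j‖ ≤ 1) (hs : Summable fun j => 1 - ‖a j‖)
    {z : ℂ} (hz : ‖z‖ < 1) : Multipliable fun j => blaschkeFactor (a j) z := by
  simpa using multipliable_one_add_of_summable (f := fun j => blaschkeFactor (a j) z - 1)
    ((hs.mul_left (2 / (1 - ‖z‖))).of_nonneg_of_le (fun _ => norm_nonneg _)
      fun j => norm_blaschkeFactor_sub_one_le (ha j) hz)

lemma differentiableOn_tprod_blaschkeFactor (ha : ∀ j, ‖a j‖ ≤ 1)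
    (hs : Summable fun j => 1 - ‖a j‖) :
    DifferentiableOn ℂ (fun z => ∏' j, blaschkeFactor (a j) z) (ball 0 1) := by
  intro z hz
  obtain ⟨R, hzR, hR⟩ := exists_between (mem_ball_zero_iff.mp hz)
  have hball : ∀ w ∈ ball (0 : ℂ) R, ‖w‖ < 1 := fun w hw => (mem_ball_zero_iff.mp hw).trans hR
  have hprod : HasProdLocallyUniformlyOn (fun j z => blaschkeFactor (a j) z)
      (fun z => ∏' j, blaschkeFactor (a j) z) (ball 0 R) := by
    have := (hs.mul_left (2 / (1 - R))).hasProdLocallyUniformlyOn_one_add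
      (isOpen_ball (x := 0) (ε := R)) (f := fun j z => blaschkeFactor (a j) z - 1)
      (Eventually.of_forall fun j w hw => ?_) (fun j w hw => ?_)
    · simpa using this
    · refine (norm_blaschkeFactor_sub_one_le (ha j) (hball w hw)).trans ?_
      have := mem_ball_zero_iff.mp hw
      gcongr
      linarith [ha j]
    · exact ((differentiableAt_blaschkeFactor (ha j) (hball w hw)).continuousAt.sub
        continuousAt_const).continuousWithinAt
  have hdiff : DifferentiableOn ℂ (fun z => ∏' j, blaschkeFactor (a j) z) (ball 0 R) :=
    hprod.differentiableOn (Eventually.of_forall fun s => by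
      simpa [Finset.prod_fn] using DifferentiableOn.finsetProd fun j _ w hw =>
        (differentiableAt_blaschkeFactor (ha j) (hball w hw)).differentiableWithinAt) isOpen_ball
  exact (hdiff.differentiableAt
    (isOpen_ball.mem_nhds (mem_ball_zero_iff.mpr hzR))).differentiableWithinAt

end BlaschkeFamily

section BlaschkeProduct

variable {a : ℕ → ℂ}

lemma IsBlaschkeSeq.summable_one_sub_norm (hB : IsBlaschkeSeq a) :
    Summable fun j => 1 - ‖a j‖ :=
  hB.2.of_nonneg_of_le (fun j => by linarith [hB.1 j])
    fun j => by nlinarith [norm_nonneg (a j), hB.1 j]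

lemma IsBlaschkeSeq.multipliable_blaschkeFactor_ne (hB : IsBlaschkeSeq a) (k : ℕ) {z : ℂ}
    (hz : ‖z‖ < 1) : Multipliable fun j : {j // j ≠ k} => blaschkeFactor (a j) z :=
  multipliable_blaschkeFactor (a := fun j : {j // j ≠ k} => a j) (fun j => (hB.1 j).le)
    (hB.summable_one_sub_norm.subtype _) hz

lemma IsBlaschkeSeq.blaschkeProduct_eq_mul_tprod_ne (hB : IsBlaschkeSeq a) {z : ℂ}
    (hz : ‖z‖ < 1) (k : ℕ) :
    blaschkeProduct a z
      = blaschkeFactor (a k) z * ∏' j : {j // j ≠ k}, blaschkeFactor (a j) z := by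
  rw [← tprod_singleton k fun j => blaschkeFactor (a j) z]
  exact (Multipliable.tprod_mul_tprod_compl (f := fun j => blaschkeFactor (a j) z) (s := {k})
    .of_finite (hB.multipliable_blaschkeFactor_ne k hz)).symm

lemma IsBlaschkeSeq.norm_tprod_blaschkeFactor_ne (hB : IsBlaschkeSeq a) (k : ℕ) {z : ℂ}
    (hz : ‖z‖ < 1) :
    ‖∏' j : {j // j ≠ k}, blaschkeFactor (a j) z‖ = ∏' j : {j // j ≠ k}, pseudoDist z (a j) := by
  simp_rw [(hB.multipliable_blaschkeFactor_ne k hz).norm_tprod, norm_blaschkeFactor]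

theorem IsBlaschkeSeq.norm_deriv_blaschkeProduct (hB : IsBlaschkeSeq a) (k : ℕ) :
    (1 - ‖a k‖ ^ 2) * ‖deriv (blaschkeProduct a) (a k)‖
      = ∏' j : {j // j ≠ k}, pseudoDist (a j) (a k) := by
  set G := fun z => ∏' j : {j // j ≠ k}, blaschkeFactor (a j) z
  have hk : a k ∈ ball (0 : ℂ) 1 := mem_ball_zero_iff.mpr (hB.1 k)
  have hG : DifferentiableAt ℂ G (a k) :=
    (differentiableOn_tprod_blaschkeFactor (a := fun j : {j // j ≠ k} => a j)
      (fun j => (hB.1 j).le) (hB.summable_one_sub_norm.subtype _)).differentiableAt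
      (isOpen_ball.mem_nhds hk)
  obtain ⟨d, hd, hd_norm⟩ := exists_hasDerivAt_blaschkeFactor_self (hB.1 k)
  have hF : HasDerivAt (blaschkeProduct a) (d * G (a k)) (a k) := by
    have hprod := hd.mul hG.hasDerivAt
    rw [blaschkeFactor_self, zero_mul, add_zero] at hprod
    refine hprod.congr_of_eventuallyEq ?_
    filter_upwards [isOpen_ball.mem_nhds hk] with z hz
    exact hB.blaschkeProduct_eq_mul_tprod_ne (mem_ball_zero_iff.mp hz) k
  have hD : 0 < 1 - ‖a k‖ ^ 2 := by nlinarith [norm_nonneg (a k), hB.1 k]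
  rw [hF.deriv, norm_mul, hd_norm, ← mul_assoc, mul_inv_cancel₀ hD.ne', one_mul,
    hB.norm_tprod_blaschkeFactor_ne k (hB.1 k)]
  simp_rw [pseudoDist_comm (a k)]

theorem IsBlaschkeSeq.norm_blaschkeProduct_rpow_le (hB : IsBlaschkeSeq a) {k : ℕ}
    (hsep : ∀ j, j ≠ k → 1 / 2 ≤ pseudoDist (a j) (a k)) {w : ℂ} {r : ℝ} (hw : ‖w‖ < 1)
    (hr : r < 1) (hwk : pseudoDist w (a k) ≤ r) :
    ‖blaschkeProduct a w‖ ^ (2 * ((1 + r) / (1 - r)))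
      ≤ ∏' j : {j // j ≠ k}, pseudoDist (a j) (a k) := by
  have hK : 0 < (1 + r) / (1 - r) :=
    div_pos (by linarith [pseudoDist_nonneg w (a k)]) (by linarith)
  have hmt : Multipliable fun j : {j // j ≠ k} => pseudoDist w (a j) := by
    simpa [norm_blaschkeFactor] using (hB.multipliable_blaschkeFactor_ne k hw).norm
  have hmv : Multipliable fun j : {j // j ≠ k} => pseudoDist (a j) (a k) := by
    simpa [norm_blaschkeFactor, pseudoDist_comm (a k)] using
      (hB.multipliable_blaschkeFactor_ne k (hB.1 k)).norm
  have hFw : ‖blaschkeProduct a w‖ ≤ ∏' j : {j // j ≠ k}, pseudoDist w (a j) := by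
    rw [hB.blaschkeProduct_eq_mul_tprod_ne hw k, norm_mul, norm_blaschkeFactor,
      hB.norm_tprod_blaschkeFactor_ne k hw]
    exact mul_le_of_le_one_left (tprod_nonneg fun j => pseudoDist_nonneg _ _)
      (pseudoDist_lt_one hw (hB.1 k)).le
  refine ge_of_tendsto hmv.hasProd (Eventually.of_forall fun s => ?_)
  calc ‖blaschkeProduct a w‖ ^ (2 * ((1 + r) / (1 - r)))
      ≤ (∏ j ∈ s, pseudoDist w (a j)) ^ (2 * ((1 + r) / (1 - r))) := by
        gcongr
        exact hFw.trans (hmt.tprod_le_prod_of_le_one (fun j => pseudoDist_nonneg _ _)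
          (fun j => (pseudoDist_lt_one hw (hB.1 j)).le) s)
    _ = ∏ j ∈ s, pseudoDist w (a j) ^ (2 * ((1 + r) / (1 - r))) :=
        (Real.finsetProd_rpow s _ (fun j _ => pseudoDist_nonneg _ _) _).symm
    _ ≤ ∏ j ∈ s, pseudoDist (a j) (a k) :=
        Finset.prod_le_prod (fun j _ => Real.rpow_nonneg (pseudoDist_nonneg _ _) _) fun j _ =>
          rpow_two_mul_le_of_one_sub_le (pseudoDist_nonneg _ _)
            (pseudoDist_lt_one hw (hB.1 j)).le (hsep j j.2) hK
            (one_sub_pseudoDist_le hw (hB.1 j) (hB.1 k) hr hwk)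

end BlaschkeProduct

lemma isDiskAut_mobius {w : ℂ} (hw : ‖w‖ < 1) : IsDiskAut (mobius w) :=
  ⟨1, w, norm_one, hw, fun _ => (one_mul _).symm⟩

section UniformlyNonzero

variable {a : ℕ → ℂ}

theorem IsBlaschkeSeq.tendstoZeroOnCompacts_comp_mobius (hB : IsBlaschkeSeq a)
    (hsep : ∀ j k, j ≠ k → 1 / 2 ≤ pseudoDist (a j) (a k)) {k : ℕ → ℕ}
    (hk : Tendsto (fun n => ∏' j : {j // j ≠ k n}, pseudoDist (a j) (a (k n))) atTop (𝓝 0)) :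
    TendstoZeroOnCompacts fun n z => blaschkeProduct a (mobius (a (k n)) z) := by
  intro K hK hKc
  obtain ⟨r, ⟨hr0, hr1⟩, hKr⟩ := exists_pos_lt_subset_ball one_pos hKc.isClosed hK
  have hp : 0 < 2 * ((1 + r) / (1 - r)) := by
    have : 0 < 1 - r := by linarith
    positivity
  rw [Metric.tendstoUniformlyOn_iff]
  intro ε hε
  filter_upwards [hk.eventually (gt_mem_nhds (Real.rpow_pos_of_pos hε _))] with n hn z hz
  have hz1 : ‖z‖ < r := mem_ball_zero_iff.mp (hKr hz)
  have hw : ‖mobius (a (k n)) z‖ < 1 := by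
    rw [norm_mobius]; exact pseudoDist_lt_one (by linarith) (hB.1 _)
  have hbound := hB.norm_blaschkeProduct_rpow_le (fun j hj => hsep j (k n) hj) hw hr1
    (by rw [pseudoDist_mobius_self (by linarith) (hB.1 _)]; exact hz1.le)
  rw [dist_zero_left]
  by_contra! hge
  linarith [Real.rpow_le_rpow hε.le hge hp.le]

theorem IsBlaschkeSeq.uniformlySeparated_of_uniformlyNonzero (hB : IsBlaschkeSeq a)
    (hsep : ∀ j k, j ≠ k → 1 / 2 ≤ pseudoDist (a j) (a k))
    (h : UniformlyNonzero (blaschkeProduct a)) : UniformlySeparated a := by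
  by_contra hnot
  simp only [UniformlySeparated, not_exists, not_and, not_forall, not_le] at hnot
  choose k hk using fun n : ℕ => hnot (1 / (n + 1)) Nat.one_div_pos_of_nat
  refine h _ (fun n => isDiskAut_mobius (hB.1 (k n)))
    (hB.tendstoZeroOnCompacts_comp_mobius hsep ?_)
  exact squeeze_zero (fun n => tprod_nonneg fun _ => pseudoDist_nonneg _ _) (fun n => (hk n).le)
    tendsto_one_div_add_atTop_nhds_zero_nat

end UniformlyNonzero

theorem separated_uniformlyNonzero_implies_unifSep_general
    (a : ℕ → ℂ) (hB : IsBlaschkeSeq a)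
    (hsep : ∀ j k : ℕ, j ≠ k → 1 / 2 < pseudoDist (a j) (a k))
    (h : UniformlyNonzero (blaschkeProduct a)) :
    (∃ δ : ℝ, 0 < δ ∧ ∀ k : ℕ,
      δ ≤ (1 - ‖a k‖ ^ 2) * ‖deriv (blaschkeProduct a) (a k)‖) ∧
    UniformlySeparated a := by
  obtain ⟨δ, hδ, hδk⟩ :=
    hB.uniformlySeparated_of_uniformlyNonzero (fun j k hjk => (hsep j k hjk).le) h
  exact ⟨⟨δ, hδ, fun k => hB.norm_deriv_blaschkeProduct k ▸ hδk k⟩, δ, hδ, hδk⟩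

/-- Let `A = (a_k)` be a Blaschke sequence of distinct points with
`ψ(a_j, a_k) > 1/2` for `j ≠ k`, and let `F = B_A`. If `F` is uniformly nonzero, then
`inf_k (1-|a_k|²)|F'(a_k)| > 0` and consequently `A` is uniformly separated. -/
theorem separated_uniformlyNonzero_implies_unifSep
    (a : ℕ → ℂ) (hB : IsBlaschkeSeq a) (hinj : Function.Injective a)
    (hsep : ∀ j k : ℕ, j ≠ k → 1 / 2 < pseudoDist (a j) (a k))
    (h : UniformlyNonzero (blaschkeProduct a)) :
    (∃ δ : ℝ, 0 < δ ∧ ∀ k : ℕ,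
      δ ≤ (1 - ‖a k‖ ^ 2) * ‖deriv (blaschkeProduct a) (a k)‖) ∧
    UniformlySeparated a :=
  separated_uniformlyNonzero_implies_unifSep_general a hB hsep h
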